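/- arXiv:2005.08059 — 3 statements merged into one kernel-verified Lean document; each statement's English description precedes it below -/
import Mathlib

section
/- Let E be a Banach lattice and let S be a positive and irreducible semigroup on E such that for each f ∈ E the limit Pf := lim_{t→∞} S(t)f exists in E. Then either P = 0, or there exist a quasi-interior point u of the positive cone E₊ and a strictly positive functional φ ∈ E' such that Pf = ⟨φ, f⟩ u for each f ∈ E; in the latter case ⟨φ, u⟩ = 1. -/
/-!
`P` is a positive operator with `S t ∘ P = P = P ∘ S t`. If `P ≠ 0`, then `u = P |f₀| ≠ 0` for some
`f₀`; choosing `ψ ≥ 0` with `ψ u > 0`, the functional `φ₀ = ψ ∘ P` is positive, `S`-invariant and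
nonzero, hence strictly positive by irreducibility. Strict positivity of an invariant functional
makes the fixed space of `S` a sublattice. A nonzero positive fixed vector `g` is quasi-interior:
a positive functional vanishing at `g` vanishes on its orbit, so it is zero by irreducibility, and
a Hahn–Banach argument with the sublinear functional `x ↦ ‖(x + J)⁺‖` on `E ⧸ J` shows that the
principal ideal `J` of `g` is dense. Since `h⁺` and `h⁻` are disjoint, a fixed `h` therefore has
a sign, so `φ₀ h = 0` forces `h = 0`; applied to `h = P f - (φ₀ f / φ₀ u) • u` this gives `P` as
the rank-one operator `f ↦ (φ₀ f / φ₀ u) • u`.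
-/

open Filter Topology Set

/-- `u` is a quasi-interior point of the positive cone `E₊`:
`u ≥ 0` and `v ⊓ (n • u) → v` for each `v ≥ 0`. -/
def IsQuasiInteriorPoint {E : Type*} [NormedAddCommGroup E] [Lattice E] [HasSolidNorm E]
    [IsOrderedAddMonoid E] (u : E) : Prop :=
  0 ≤ u ∧ ∀ v : E, 0 ≤ v →
    Filter.Tendsto (fun n : ℕ => v ⊓ (n • u)) Filter.atTop (nhds v)

open LatticeOrderedAddCommGroup

theorem exists_linearMap_le_sublinear_eq {V : Type*} [AddCommGroup V] [Module ℝ V] (p : V → ℝ)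
    (p_hom : ∀ c : ℝ, 0 < c → ∀ x, p (c • x) = c * p x) (p_add : ∀ x y, p (x + y) ≤ p x + p y)
    {v : V} (hv : v ≠ 0) : ∃ g : V →ₗ[ℝ] ℝ, (∀ x, g x ≤ p x) ∧ g v = p v := by
  have p_zero : p 0 = 0 := by
    have := p_hom 2 two_pos 0
    rw [smul_zero] at this
    linarith
  let f : V →ₗ.[ℝ] ℝ := LinearPMap.mkSpanSingleton v (p v) hv
  have hf : ∀ x : f.domain, f x ≤ p x := by
    rintro ⟨x, hx⟩
    obtain ⟨c, rfl⟩ := Submodule.mem_span_singleton.1 hx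
    rw [LinearPMap.mkSpanSingleton'_apply v (p v) _ c hx]
    change c * p v ≤ p (c • v)
    rcases lt_or_ge 0 c with hc | hc
    · exact (p_hom c hc v).ge
    · -- `0 = p 0 ≤ p (c • v) + p (-c • v)`
      have := p_add (c • v) ((-c) • v)
      rcases hc.lt_or_eq with hc | rfl
      · rw [← add_smul, add_neg_cancel, zero_smul, p_zero, p_hom (-c) (neg_pos.2 hc)] at this
        linarith
      · simp [p_zero]
  obtain ⟨g, hgf, hgp⟩ := exists_extension_of_le_sublinear f p p_hom p_add hf
  refine ⟨g, hgp, ?_⟩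
  exact (hgf ⟨v, Submodule.mem_span_singleton_self v⟩).trans
    (LinearPMap.mkSpanSingleton_apply ℝ ℝ hv (p v))

theorem nonneg_of_two_pow_nsmul_nonneg {α : Type*} [AddCommGroup α] [Lattice α]
    [IsOrderedAddMonoid α] (k : ℕ) {a : α} (h : 0 ≤ 2 ^ k • a) : 0 ≤ a := by
  induction k with
  | zero => simpa using h
  | succ k ih => exact ih (nsmul_two_semiclosed (by rwa [pow_succ, mul_nsmul] at h))

theorem posPart_add_le {α : Type*} [AddCommGroup α] [Lattice α] [IsOrderedAddMonoid α]
    (a b : α) : (a + b)⁺ ≤ a⁺ + b⁺ :=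
  sup_le (add_le_add (le_posPart a) (le_posPart b))
    (add_nonneg (posPart_nonneg a) (posPart_nonneg b))

theorem posPart_le_abs {α : Type*} [AddCommGroup α] [Lattice α] [IsOrderedAddMonoid α]
    (a : α) : a⁺ ≤ |a| :=
  sup_le (le_abs_self a) (abs_nonneg a)

section OrderedModule

variable {𝕜 M : Type*} [Field 𝕜] [LinearOrder 𝕜] [IsStrictOrderedRing 𝕜] [AddCommGroup M]
  [Lattice M] [Module 𝕜 M] [PosSMulMono 𝕜 M] {c : 𝕜}

theorem smul_sup_of_nonneg (hc : 0 ≤ c) (x y : M) : c • (x ⊔ y) = c • x ⊔ c • y := by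
  rcases hc.eq_or_lt with rfl | hc
  · simp
  · exact (OrderIso.smulRight hc).map_sup x y

theorem smul_inf_of_nonneg (hc : 0 ≤ c) (x y : M) : c • (x ⊓ y) = c • x ⊓ c • y := by
  rcases hc.eq_or_lt with rfl | hc
  · simp
  · exact (OrderIso.smulRight hc).map_inf x y

theorem posPart_smul_of_nonneg (hc : 0 ≤ c) (x : M) : (c • x)⁺ = c • x⁺ := by
  rw [posPart_def, posPart_def, smul_sup_of_nonneg hc, smul_zero]

theorem abs_smul_lattice (c : 𝕜) (x : M) : |c • x| = |c| • |x| := by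
  rcases le_total 0 c with hc | hc
  · rw [abs_of_nonneg hc, abs, abs, smul_sup_of_nonneg hc, smul_neg]
  · rw [abs_of_nonpos hc, ← abs_neg, ← neg_smul, abs, abs,
      smul_sup_of_nonneg (neg_nonneg.2 hc), smul_neg]

variable [IsOrderedAddMonoid M]

variable (𝕜) in
def principalIdeal (g : M) : Submodule 𝕜 M where
  carrier := {w | ∃ c : 𝕜, |w| ≤ c • g}
  zero_mem' := ⟨0, by simp⟩
  add_mem' := by
    rintro a b ⟨c, hc⟩ ⟨d, hd⟩
    exact ⟨c + d, (abs_add_le a b).trans (by rw [add_smul]; exact add_le_add hc hd)⟩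
  smul_mem' := by
    rintro a w ⟨c, hc⟩
    refine ⟨|a| * c, ?_⟩
    rw [abs_smul_lattice, mul_smul]
    exact smul_le_smul_of_nonneg_left hc (abs_nonneg a)

theorem mem_principalIdeal_self {g : M} (hg : 0 ≤ g) : g ∈ principalIdeal 𝕜 g :=
  ⟨1, by rw [abs_of_nonneg hg, one_smul]⟩

theorem isSolid_principalIdeal (g : M) : IsSolid (principalIdeal 𝕜 g : Set M) :=
  fun _ ⟨c, hc⟩ _ hyx => ⟨c, hyx.trans hc⟩

end OrderedModule

section NormedLattice

variable {E : Type*} [NormedAddCommGroup E] [Lattice E] [HasSolidNorm E] [IsOrderedAddMonoid E]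
  [NormedSpace ℝ E]

-- Compatibility of the order with real scalars is not among the assumed classes; it follows
-- from closedness of the positive cone by dyadic approximation of `c`.
theorem HasSolidNorm.smul_nonneg {c : ℝ} (hc : 0 ≤ c) {x : E} (hx : 0 ≤ x) : 0 ≤ c • x := by
  have dyadic : ∀ m k : ℕ, 0 ≤ ((m : ℝ) / 2 ^ k) • x := fun m k ↦ by
    refine nonneg_of_two_pow_nsmul_nonneg k ?_
    rw [← Nat.cast_smul_eq_nsmul ℝ, smul_smul, Nat.cast_pow, Nat.cast_ofNat,
      mul_div_cancel₀ _ (by positivity), Nat.cast_smul_eq_nsmul]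
    exact nsmul_nonneg hx m
  have hlim : Tendsto (fun k : ℕ ↦ ((⌈c * 2 ^ k⌉₊ : ℝ) / 2 ^ k) • x) atTop (𝓝 (c • x)) :=
    ((tendsto_nat_ceil_mul_div_atTop hc).comp
      (tendsto_pow_atTop_atTop_of_one_lt one_lt_two)).smul_const x
  exact ge_of_tendsto' hlim fun k ↦ dyadic _ _

instance HasSolidNorm.posSMulMono : PosSMulMono ℝ E :=
  .of_smul_nonneg fun _ hc _ hx ↦ HasSolidNorm.smul_nonneg hc hx

theorem isQuasiInteriorPoint_of_dense_principalIdeal {g : E} (hg : 0 ≤ g)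
    (hdense : Dense (principalIdeal ℝ g : Set E)) : IsQuasiInteriorPoint g := by
  refine ⟨hg, fun v _ ↦ Metric.tendsto_atTop.2 fun ε hε ↦ ?_⟩
  obtain ⟨w, ⟨c, hwc⟩, hvw⟩ := Metric.mem_closure_iff.1 (hdense v) ε hε
  refine ⟨⌈c⌉₊, fun n hn ↦ ?_⟩
  have hw : w ≤ n • g := calc
    w ≤ c • g := (le_abs_self w).trans hwc
    _ ≤ (n : ℝ) • g :=
      smul_le_smul_of_nonneg_right ((Nat.le_ceil c).trans (by exact_mod_cast hn)) hg
    _ = n • g := Nat.cast_smul_eq_nsmul ℝ n g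
  have hgap : v - v ⊓ n • g ≤ |v - w| := by
    rw [inf_eq_sub_posPart_sub, sub_sub_cancel]
    exact (posPart_mono (sub_le_sub_left hw v)).trans (posPart_le_abs _)
  calc dist (v ⊓ n • g) v = ‖v - v ⊓ n • g‖ := by rw [dist_comm, dist_eq_norm]
    _ ≤ ‖v - w‖ := norm_le_norm_of_abs_le_abs
        (by rwa [abs_of_nonneg (sub_nonneg.2 inf_le_left)])
    _ < ε := by rwa [← dist_eq_norm]

theorem norm_mk_le_norm_mk_of_isSolid {J : Submodule ℝ E} (hJ : IsSolid (J : Set E)) {a b : E}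
    (ha : 0 ≤ a) (hab : a ≤ b) : ‖J.mkQ a‖ ≤ ‖J.mkQ b‖ := by
  change ‖(a : E ⧸ J.toAddSubgroup)‖ ≤ ‖(b : E ⧸ J.toAddSubgroup)‖
  rw [QuotientAddGroup.norm_mk, QuotientAddGroup.norm_mk]
  refine (Metric.le_infDist ⟨0, J.zero_mem⟩).2 fun w hw ↦ ?_
  have hmem : w⁺ ⊓ a ∈ J := hJ hw <| by
    rw [abs_of_nonneg (le_inf (posPart_nonneg w) ha)]
    exact inf_le_left.trans (posPart_le_abs w)
  have hgap : a - w⁺ ⊓ a ≤ |b - w| := by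
    rw [inf_comm, inf_eq_sub_posPart_sub, sub_sub_cancel]
    exact (posPart_mono (sub_le_sub hab (le_posPart w))).trans (posPart_le_abs _)
  calc Metric.infDist a J ≤ dist a (w⁺ ⊓ a) := Metric.infDist_le_dist_of_mem hmem
    _ ≤ dist b w := by
      rw [dist_eq_norm, dist_eq_norm]
      exact norm_le_norm_of_abs_le_abs (by rwa [abs_of_nonneg (sub_nonneg.2 inf_le_right)])

theorem exists_pos_dual_of_notMem_closure {J : Submodule ℝ E} (hJ : IsSolid (J : Set E)) {v : E}
    (hv : 0 ≤ v) (hvJ : v ∉ closure (J : Set E)) :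
    ∃ φ : E →L[ℝ] ℝ, (∀ f, 0 ≤ f → 0 ≤ φ f) ∧ (∀ w ∈ J, φ w = 0) ∧ 0 < φ v := by
  set p : E → ℝ := fun x ↦ ‖J.mkQ x⁺‖
  have p_hom : ∀ c : ℝ, 0 < c → ∀ x, p (c • x) = c * p x := fun c hc x ↦ by
    simp only [p, posPart_smul_of_nonneg hc.le, map_smul, norm_smul, Real.norm_of_nonneg hc.le]
  have p_add : ∀ x y, p (x + y) ≤ p x + p y := fun x y ↦
    (norm_mk_le_norm_mk_of_isSolid hJ (posPart_nonneg _) (posPart_add_le x y)).trans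
      (by rw [map_add]; exact norm_add_le _ _)
  have p_le_norm : ∀ x, p x ≤ ‖x‖ := fun x ↦
    (Submodule.Quotient.norm_mk_le J _).trans <| norm_le_norm_of_abs_le_abs <| by
      rw [abs_of_nonneg (posPart_nonneg x)]
      exact posPart_le_abs x
  have p_eq_zero : ∀ x, x⁺ ∈ J → p x = 0 := fun x hx ↦ by
    simp [p, (Submodule.Quotient.mk_eq_zero J).2 hx]
  have p_v : 0 < p v := by
    refine (norm_nonneg _).lt_of_ne' fun h ↦ hvJ ?_
    rw [posPart_eq_self.2 hv] at h
    exact (QuotientAddGroup.norm_mk_eq_zero_iff_mem_closure (S := J.toAddSubgroup)).1 h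
  have hv0 : v ≠ 0 := by
    rintro rfl
    exact hvJ (subset_closure J.zero_mem)
  obtain ⟨g, hgp, hgv⟩ := exists_linearMap_le_sublinear_eq p p_hom p_add hv0
  have hg_nonneg : ∀ f, 0 ≤ f → 0 ≤ g f := fun f hf ↦ by
    have := hgp (-f)
    rw [map_neg, p_eq_zero _ (by rw [posPart_eq_zero.2 (neg_nonpos.2 hf)]; exact J.zero_mem)]
      at this
    linarith
  have hg_J : ∀ w ∈ J, g w ≤ 0 := fun w hw ↦ (hgp w).trans_eq <| p_eq_zero w <| hJ hw <| by
    rw [abs_of_nonneg (posPart_nonneg w)]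
    exact posPart_le_abs w
  let φ : E →L[ℝ] ℝ := g.mkContinuous 1 fun x ↦ by
    rw [one_mul, Real.norm_eq_abs, abs_le]
    constructor
    · linarith [hgp (-x), p_le_norm (-x), norm_neg x, map_neg g x]
    · exact (hgp x).trans (p_le_norm x)
  refine ⟨φ, hg_nonneg, fun w hw ↦ (hg_J w hw).antisymm ?_, hgv ▸ p_v⟩
  have := hg_J (-w) (J.neg_mem hw)
  rw [map_neg] at this
  exact neg_nonpos.1 this

theorem exists_pos_dual_pos {v : E} (hv : 0 ≤ v) (hv0 : v ≠ 0) :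
    ∃ φ : E →L[ℝ] ℝ, (∀ f, 0 ≤ f → 0 ≤ φ f) ∧ 0 < φ v := by
  have hsolid : IsSolid ((⊥ : Submodule ℝ E) : Set E) := fun x hx y hyx ↦ by
    simp only [Submodule.bot_coe, mem_singleton_iff] at hx ⊢
    subst hx
    exact norm_le_zero_iff.1 ((norm_le_norm_of_abs_le_abs hyx).trans_eq norm_zero)
  obtain ⟨φ, hφ, -, hφv⟩ := exists_pos_dual_of_notMem_closure hsolid hv <| by
    rwa [Submodule.bot_coe, closure_singleton, mem_singleton_iff]
  exact ⟨φ, hφ, hφv⟩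

theorem isQuasiInteriorPoint_of_forall_pos_dual {g : E} (hg : 0 ≤ g)
    (h : ∀ φ : E →L[ℝ] ℝ, (∀ f, 0 ≤ f → 0 ≤ φ f) → φ g = 0 → φ = 0) :
    IsQuasiInteriorPoint g := by
  have hpos : ∀ v, 0 ≤ v → v ∈ (principalIdeal ℝ g).topologicalClosure := fun v hv ↦ by
    by_contra hvJ
    obtain ⟨φ, hφ, hφJ, hφv⟩ :=
      exists_pos_dual_of_notMem_closure (isSolid_principalIdeal g) hv hvJ
    rw [h φ hφ (hφJ g (mem_principalIdeal_self hg))] at hφv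
    exact hφv.false
  refine isQuasiInteriorPoint_of_dense_principalIdeal hg fun v ↦ ?_
  rw [← posPart_sub_negPart v]
  exact Submodule.sub_mem _ (hpos _ (posPart_nonneg v)) (hpos _ (negPart_nonneg v))

theorem IsQuasiInteriorPoint.eq_zero_of_inf_eq_zero {u v : E} (hu : IsQuasiInteriorPoint u)
    (hv : 0 ≤ v) (huv : v ⊓ u = 0) : v = 0 := by
  have hn : ∀ n : ℕ, v ⊓ n • u = 0 := fun n ↦ by
    refine le_antisymm ?_ (le_inf hv (nsmul_nonneg hu.1 n))
    calc v ⊓ n • u ≤ (n + 1 : ℝ) • v ⊓ (n + 1 : ℝ) • u := by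
          gcongr
          · exact le_smul_of_one_le_left hv (by linarith [n.cast_nonneg (α := ℝ)])
          · rw [← Nat.cast_smul_eq_nsmul ℝ]
            exact smul_le_smul_of_nonneg_right (by linarith) hu.1
      _ = 0 := by rw [← smul_inf_of_nonneg (by positivity), huv, smul_zero]
  exact tendsto_nhds_unique (hu.2 v hv) (by simp only [hn]; exact tendsto_const_nhds)

end NormedLattice

section PositiveOperator

variable {M F G : Type*} [AddCommGroup M] [Lattice M] [IsOrderedAddMonoid M] [FunLike F M M] {T : F}

theorem apply_eq_of_le_apply [FunLike G M ℝ] [AddMonoidHomClass G M ℝ] {φ : G}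
    (hφ : ∀ f, 0 ≤ f → f ≠ 0 → 0 < φ f) {x : M} (hφx : φ (T x) = φ x) (hx : x ≤ T x) :
    T x = x := by
  by_contra hne
  have := hφ _ (sub_nonneg.2 hx) (sub_ne_zero.2 hne)
  rw [map_sub, hφx, sub_self] at this
  exact this.false

variable [AddMonoidHomClass F M M]

theorem abs_apply_le_apply_abs (hT : ∀ f, 0 ≤ f → 0 ≤ T f) (h : M) : |T h| ≤ T |h| := by
  have hmono := (monotone_iff_map_nonneg T).2 hT
  exact abs_le'.2 ⟨hmono (le_abs_self h), by simpa only [map_neg] using hmono (neg_le_abs h)⟩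

theorem posPart_le_apply_posPart (hT : ∀ f, 0 ≤ f → 0 ≤ T f) {h : M} (hh : T h = h) :
    h⁺ ≤ T h⁺ :=
  sup_le (hh.symm.le.trans ((monotone_iff_map_nonneg T).2 hT (le_posPart h)))
    (hT _ (posPart_nonneg h))

end PositiveOperator

section Limit

variable {E : Type*} [TopologicalSpace E] [AddCommMonoid E] [Module ℝ E]
  {S : ℝ → E →L[ℝ] E} {P : E →L[ℝ] E}

theorem limit_nonneg [Preorder E] [ClosedIciTopology E]
    (hpos : ∀ t ∈ Ioi (0 : ℝ), ∀ f : E, 0 ≤ f → 0 ≤ S t f)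
    (hP : ∀ f : E, Tendsto (fun t : ℝ => S t f) atTop (𝓝 (P f))) {f : E} (hf : 0 ≤ f) :
    0 ≤ P f := by
  refine ge_of_tendsto (hP f) ?_
  filter_upwards [eventually_gt_atTop 0] with t ht
  exact hpos t ht f hf

variable [T2Space E]

theorem apply_limit_eq_limit
    (hsg : ∀ s ∈ Ioi (0 : ℝ), ∀ t ∈ Ioi (0 : ℝ), S (s + t) = (S t).comp (S s))
    (hP : ∀ f : E, Tendsto (fun t : ℝ => S t f) atTop (𝓝 (P f))) {t : ℝ} (ht : t ∈ Ioi 0)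
    (f : E) : S t (P f) = P f := by
  refine tendsto_nhds_unique (((S t).continuous.tendsto _).comp (hP f)) ?_
  refine ((hP f).comp (tendsto_atTop_add_const_right _ t tendsto_id)).congr' ?_
  filter_upwards [eventually_gt_atTop 0] with s hs
  simp [hsg s hs t ht]

theorem limit_apply_eq_limit
    (hsg : ∀ s ∈ Ioi (0 : ℝ), ∀ t ∈ Ioi (0 : ℝ), S (s + t) = (S t).comp (S s))
    (hP : ∀ f : E, Tendsto (fun t : ℝ => S t f) atTop (𝓝 (P f))) {t : ℝ} (ht : t ∈ Ioi 0)
    (f : E) : P (S t f) = P f := by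
  refine tendsto_nhds_unique (hP (S t f)) ?_
  refine ((hP f).comp (tendsto_atTop_add_const_left _ t tendsto_id)).congr' ?_
  filter_upwards [eventually_gt_atTop 0] with s hs
  simp [hsg t ht s hs]

theorem limit_eq_of_fixed (hP : ∀ f : E, Tendsto (fun t : ℝ => S t f) atTop (𝓝 (P f)))
    {x : E} (hx : ∀ t ∈ Ioi (0 : ℝ), S t x = x) : P x = x := by
  refine tendsto_nhds_unique (hP x) (tendsto_const_nhds.congr' ?_)
  filter_upwards [eventually_gt_atTop 0] with t ht
  exact (hx t ht).symm

end Limit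

section Semigroup

variable {E : Type*} [NormedAddCommGroup E] [Lattice E] [NormedSpace ℝ E] {S : ℝ → E →L[ℝ] E}

def IsIrreducibleSemigroup (S : ℝ → E →L[ℝ] E) : Prop :=
  ∀ f : E, 0 ≤ f → f ≠ 0 → ∀ φ : E →L[ℝ] ℝ,
    (∀ g : E, 0 ≤ g → 0 ≤ φ g) → φ ≠ 0 → ∃ t ∈ Ioi (0 : ℝ), 0 < φ (S t f)

namespace IsIrreducibleSemigroup

theorem pos_of_invariant (hS : IsIrreducibleSemigroup S) {φ : E →L[ℝ] ℝ}
    (hφ : ∀ f, 0 ≤ f → 0 ≤ φ f) (hφ0 : φ ≠ 0)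
    (hφS : ∀ t ∈ Ioi (0 : ℝ), ∀ x, φ (S t x) = φ x) {f : E} (hf : 0 ≤ f) (hf0 : f ≠ 0) :
    0 < φ f := by
  obtain ⟨t, ht, hpos⟩ := hS f hf hf0 φ hφ hφ0
  rwa [hφS t ht] at hpos

variable [HasSolidNorm E] [IsOrderedAddMonoid E]

theorem isQuasiInteriorPoint_of_fixed (hS : IsIrreducibleSemigroup S) {g : E} (hg : 0 ≤ g)
    (hg0 : g ≠ 0) (hfix : ∀ t ∈ Ioi (0 : ℝ), S t g = g) : IsQuasiInteriorPoint g :=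
  isQuasiInteriorPoint_of_forall_pos_dual hg fun φ hφ hφg ↦ by
    by_contra hφ0
    obtain ⟨t, ht, hpos⟩ := hS g hg hg0 φ hφ hφ0
    rw [hfix t ht, hφg] at hpos
    exact hpos.false

theorem eq_zero_of_fixed (hS : IsIrreducibleSemigroup S)
    (hpos : ∀ t ∈ Ioi (0 : ℝ), ∀ f : E, 0 ≤ f → 0 ≤ S t f)
    {φ : E →L[ℝ] ℝ} (hφ : ∀ f, 0 ≤ f → f ≠ 0 → 0 < φ f)
    (hφS : ∀ t ∈ Ioi (0 : ℝ), ∀ x, φ (S t x) = φ x) {h : E}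
    (hfix : ∀ t ∈ Ioi (0 : ℝ), S t h = h) (hφh : φ h = 0) : h = 0 := by
  have posPart_fixed : ∀ k : E, (∀ t ∈ Ioi (0 : ℝ), S t k = k) → ∀ t ∈ Ioi (0 : ℝ),
      S t k⁺ = k⁺ := fun k hk t ht ↦
    apply_eq_of_le_apply hφ (hφS t ht _) (posPart_le_apply_posPart (hpos t ht) (hk t ht))
  have negPart_fixed : ∀ t ∈ Ioi (0 : ℝ), S t h⁻ = h⁻ := by
    simpa only [posPart_neg] using
      posPart_fixed (-h) fun t ht ↦ by rw [map_neg, hfix t ht]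
  -- a nonzero `h⁻` would be quasi-interior, but it is disjoint from `h⁺`
  have hsign : h⁺ = 0 ∨ h⁻ = 0 := by
    by_contra! hne
    exact hne.1 <| (hS.isQuasiInteriorPoint_of_fixed (negPart_nonneg h) hne.2
      negPart_fixed).eq_zero_of_inf_eq_zero (posPart_nonneg h) (posPart_inf_negPart_eq_zero h)
  by_contra hh0
  rcases hsign with hneg | hnonneg
  · have := hφ (-h) (neg_nonneg.2 (posPart_eq_zero.1 hneg)) (neg_ne_zero.2 hh0)
    rw [map_neg, hφh, neg_zero] at this
    exact this.false
  · exact (hφ h (negPart_eq_zero.1 hnonneg) hh0).ne' hφh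

theorem eq_smul_of_fixed (hS : IsIrreducibleSemigroup S)
    (hpos : ∀ t ∈ Ioi (0 : ℝ), ∀ f : E, 0 ≤ f → 0 ≤ S t f)
    {φ : E →L[ℝ] ℝ} (hφ : ∀ f, 0 ≤ f → f ≠ 0 → 0 < φ f)
    (hφS : ∀ t ∈ Ioi (0 : ℝ), ∀ x, φ (S t x) = φ x) {u h : E}
    (hu : ∀ t ∈ Ioi (0 : ℝ), S t u = u) (hφu : φ u ≠ 0) (hh : ∀ t ∈ Ioi (0 : ℝ), S t h = h) :
    h = (φ h / φ u) • u := by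
  refine sub_eq_zero.1 (hS.eq_zero_of_fixed hpos hφ hφS (fun t ht ↦ ?_) ?_)
  · rw [map_sub, map_smul, hh t ht, hu t ht]
  · rw [map_sub, map_smul, smul_eq_mul, div_mul_cancel₀ _ hφu, sub_self]

end IsIrreducibleSemigroup

end Semigroup

theorem statement2_general
    {E : Type*} [NormedAddCommGroup E] [Lattice E] [HasSolidNorm E] [IsOrderedAddMonoid E]
    [NormedSpace ℝ E]
    (S : ℝ → E →L[ℝ] E)
    (hsg : ∀ s ∈ Ioi (0 : ℝ), ∀ t ∈ Ioi (0 : ℝ), S (s + t) = (S t).comp (S s))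
    (hpos : ∀ t ∈ Ioi (0 : ℝ), ∀ f : E, 0 ≤ f → 0 ≤ S t f)
    (hirr : ∀ f : E, 0 ≤ f → f ≠ 0 → ∀ φ : E →L[ℝ] ℝ,
      (∀ g : E, 0 ≤ g → 0 ≤ φ g) → φ ≠ 0 → ∃ t ∈ Ioi (0 : ℝ), 0 < φ (S t f))
    (P : E →L[ℝ] E)
    (hP : ∀ f : E, Tendsto (fun t : ℝ => S t f) atTop (𝓝 (P f))) :
    P = 0 ∨
      ∃ (u : E) (φ : E →L[ℝ] ℝ), IsQuasiInteriorPoint u ∧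
        (∀ f : E, 0 ≤ f → f ≠ 0 → 0 < φ f) ∧
        (∀ f : E, P f = φ f • u) ∧ φ u = 1 := by
  have hS : IsIrreducibleSemigroup S := hirr
  refine or_iff_not_imp_left.2 fun hP0 ↦ ?_
  obtain ⟨f₀, hf₀⟩ : ∃ f, P f ≠ 0 := by
    by_contra! h
    exact hP0 (ContinuousLinearMap.ext h)
  have hPpos : ∀ f, 0 ≤ f → 0 ≤ P f := fun f ↦ limit_nonneg hpos hP
  have hPfix : ∀ f, ∀ t ∈ Ioi (0 : ℝ), S t (P f) = P f := fun f t ht ↦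
    apply_limit_eq_limit hsg hP ht f
  set u := P |f₀|
  have hu : 0 ≤ u := hPpos _ (abs_nonneg f₀)
  have hu0 : u ≠ 0 := fun h ↦ hf₀ <| norm_le_zero_iff.1 <| (norm_le_norm_of_abs_le_abs <|
    (abs_apply_le_apply_abs hPpos f₀).trans_eq (by rw [abs_zero]; exact h)).trans_eq norm_zero
  obtain ⟨ψ, hψ, hψu⟩ := exists_pos_dual_pos hu hu0
  set φ₀ := ψ.comp P
  have hφ₀P : ∀ f, φ₀ (P f) = φ₀ f := fun f ↦ congrArg ψ (limit_eq_of_fixed hP (hPfix f))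
  have hφ₀ψ : φ₀ u = ψ u := hφ₀P |f₀|
  have hφ₀S : ∀ t ∈ Ioi (0 : ℝ), ∀ x, φ₀ (S t x) = φ₀ x := fun t ht x ↦
    congrArg ψ (limit_apply_eq_limit hsg hP ht x)
  have hφ₀ : ∀ f, 0 ≤ f → f ≠ 0 → 0 < φ₀ f := fun f ↦
    hS.pos_of_invariant (fun x hx ↦ hψ (P x) (hPpos x hx))
      (fun h ↦ by simp [← hφ₀ψ, h] at hψu) hφ₀S
  have hφ₀u := hφ₀ u hu hu0
  refine ⟨u, (φ₀ u)⁻¹ • φ₀, hS.isQuasiInteriorPoint_of_fixed hu hu0 (hPfix _),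
    fun f hf hf0 ↦ mul_pos (inv_pos.2 hφ₀u) (hφ₀ f hf hf0), fun f ↦ ?_, inv_mul_cancel₀ hφ₀u.ne'⟩
  rw [hS.eq_smul_of_fixed hpos hφ₀ hφ₀S (hPfix _) hφ₀u.ne' (hPfix f), hφ₀P, div_eq_inv_mul]
  rfl

/-- Let `S` be a positive and irreducible semigroup on a Banach lattice `E`
such that `S t f → P f` as `t → ∞` for each `f`.  Then either `P = 0` or `P = φ ⊗ u` for a
quasi-interior point `u` of `E₊` and a strictly positive functional `φ`; in the latter case
`⟨φ, u⟩ = 1`. -/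
theorem statement2
    {E : Type*} [NormedAddCommGroup E] [Lattice E] [HasSolidNorm E] [IsOrderedAddMonoid E]
    [NormedSpace ℝ E] [CompleteSpace E]
    (S : ℝ → E →L[ℝ] E)
    (hsg : ∀ s ∈ Ioi (0 : ℝ), ∀ t ∈ Ioi (0 : ℝ), S (s + t) = (S t).comp (S s))
    (hloc : ∃ C : ℝ, ∀ t ∈ Ioc (0 : ℝ) 1, ‖S t‖ ≤ C)
    (hpos : ∀ t ∈ Ioi (0 : ℝ), ∀ f : E, 0 ≤ f → 0 ≤ S t f)
    (hirr : ∀ f : E, 0 ≤ f → f ≠ 0 → ∀ φ : E →L[ℝ] ℝ,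
      (∀ g : E, 0 ≤ g → 0 ≤ φ g) → φ ≠ 0 → ∃ t ∈ Ioi (0 : ℝ), 0 < φ (S t f))
    (P : E →L[ℝ] E)
    (hP : ∀ f : E, Tendsto (fun t : ℝ => S t f) atTop (𝓝 (P f))) :
    P = 0 ∨
      ∃ (u : E) (φ : E →L[ℝ] ℝ), IsQuasiInteriorPoint u ∧
        (∀ f : E, 0 ≤ f → f ≠ 0 → 0 < φ f) ∧
        (∀ f : E, P f = φ f • u) ∧ φ u = 1 :=
  statement2_general S hsg hpos hirr P hP
end

section
/- Let E be a Banach lattice, let S be a semigroup on E and assume that S(t) converges in operator norm to an operator P ∈ L(E) as t → ∞. Then there exist real numbers M ≥ 0 and δ > 0 such that ‖S(t) − P‖ ≤ M e^{−δ t} for all t ∈ (0,∞); that is, the convergence is exponentially fast. -/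
open Filter Topology Set

/-!
Writing `R t = S t - P`, the identities `S s * P = P * S s = P * P = P` (obtained by letting one
time go to infinity in the semigroup law) show that `R` is again a semigroup. A locally bounded
semigroup grows at most exponentially, so `R` is bounded on every interval `(0, τ]`, and once
`‖R τ‖ < 1` the semigroup law `R (t + τ) = R τ * R t` turns this into exponential decay.
-/

open Real

def IsSemigroup {A : Type*} [Mul A] (S : ℝ → A) : Prop :=
  ∀ s ∈ Ioi (0 : ℝ), ∀ t ∈ Ioi (0 : ℝ), S (s + t) = S t * S s

namespace IsSemigroup

variable {A : Type*} [NormedRing A] {R : ℝ → A}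

theorem norm_le_mul_exp_of_Ioc (hR : IsSemigroup R) {τ M ω : ℝ} (hτ : 0 < τ)
    (hstep : ‖R τ‖ ≤ exp (ω * τ)) (hbase : ∀ t ∈ Ioc 0 τ, ‖R t‖ ≤ M * exp (ω * t)) :
    ∀ t ∈ Ioi 0, ‖R t‖ ≤ M * exp (ω * t) := by
  have hbelow : ∀ n : ℕ, ∀ t ∈ Ioc 0 (n * τ), ‖R t‖ ≤ M * exp (ω * t) := by
    intro n
    induction n with
    | zero =>
      rintro t ⟨ht0, htn⟩
      simp only [Nat.cast_zero, zero_mul] at htn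
      linarith
    | succ n ih =>
      rintro t ⟨ht0, htn⟩
      rcases le_or_gt t τ with htτ | hτt
      · exact hbase t ⟨ht0, htτ⟩
      have hsplit : R t = R τ * R (t - τ) := by
        simpa using hR (t - τ) (sub_pos.2 hτt) τ hτ
      have hprev : ‖R (t - τ)‖ ≤ M * exp (ω * (t - τ)) :=
        ih _ ⟨sub_pos.2 hτt, by push_cast at htn; linarith⟩
      calc ‖R t‖ ≤ ‖R τ‖ * ‖R (t - τ)‖ := hsplit ▸ norm_mul_le _ _
        _ ≤ exp (ω * τ) * (M * exp (ω * (t - τ))) :=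
          mul_le_mul hstep hprev (norm_nonneg _) (exp_pos _).le
        _ = M * exp (ω * t) := by rw [mul_left_comm, ← exp_add]; ring_nf
  intro t ht
  obtain ⟨n, hn⟩ := exists_nat_ge (t / τ)
  exact hbelow n t ⟨ht, (div_le_iff₀ hτ).1 hn⟩

theorem exists_norm_le_exp (hR : IsSemigroup R) {C : ℝ} (hC : ∀ t ∈ Ioc 0 1, ‖R t‖ ≤ C) :
    ∃ M ω : ℝ, 0 ≤ M ∧ ∀ t ∈ Ioi 0, ‖R t‖ ≤ M * exp (ω * t) := by
  set C' := max C 1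
  have hC'1 : 1 ≤ C' := le_max_right _ _
  have hC' : ∀ t ∈ Ioc 0 1, ‖R t‖ ≤ C' := fun t ht => (hC t ht).trans (le_max_left _ _)
  refine ⟨C', log C', by positivity, hR.norm_le_mul_exp_of_Ioc one_pos ?_ ?_⟩
  · rw [mul_one, exp_log (by positivity)]
    exact hC' 1 ⟨one_pos, le_rfl⟩
  · intro t ht
    calc ‖R t‖ ≤ C' := hC' t ht
      _ ≤ C' * exp (log C' * t) :=
        le_mul_of_one_le_right (by positivity) (one_le_exp (mul_nonneg (log_nonneg hC'1) ht.1.le))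

theorem exists_norm_le_exp_neg_of_norm_lt_one (hR : IsSemigroup R) {C : ℝ}
    (hC : ∀ t ∈ Ioc 0 1, ‖R t‖ ≤ C) {τ : ℝ} (hτ : 0 < τ) (hRτ : ‖R τ‖ < 1) :
    ∃ M : ℝ, 0 ≤ M ∧ ∃ δ : ℝ, 0 < δ ∧ ∀ t ∈ Ioi 0, ‖R t‖ ≤ M * exp (-δ * t) := by
  obtain ⟨M₀, ω, hM₀, hgrowth⟩ := hR.exists_norm_le_exp hC
  set q := max ‖R τ‖ 2⁻¹
  have hq0 : 0 < q := lt_max_of_lt_right (by norm_num)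
  have hq1 : q < 1 := max_lt hRτ (by norm_num)
  set δ := -log q / τ
  have hδ : 0 < δ := div_pos (neg_pos.2 (log_neg hq0 hq1)) hτ
  set M₁ := M₀ * exp (|ω| * τ)
  refine ⟨M₁ * exp (δ * τ), by positivity, δ, hδ, hR.norm_le_mul_exp_of_Ioc hτ ?_ ?_⟩
  · have hδτ : -δ * τ = log q := by rw [neg_mul, div_mul_cancel₀ _ hτ.ne', neg_neg]
    rw [hδτ, exp_log hq0]
    exact le_max_left _ _
  · rintro t ⟨ht0, htτ⟩
    have hωt : ω * t ≤ |ω| * τ :=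
      (mul_le_mul_of_nonneg_right (le_abs_self ω) ht0.le).trans (by gcongr)
    calc ‖R t‖ ≤ M₀ * exp (ω * t) := hgrowth t ht0
      _ ≤ M₀ * exp (|ω| * τ) := by gcongr
      _ ≤ M₁ * exp (δ * (τ - t)) :=
        le_mul_of_one_le_right (by positivity) (one_le_exp (by nlinarith))
      _ = M₁ * exp (δ * τ) * exp (-δ * t) := by rw [mul_assoc M₁, ← exp_add]; ring_nf

variable {S : ℝ → A} {P : A}

theorem mul_eq_of_tendsto (hS : IsSemigroup S) (hP : Tendsto S atTop (𝓝 P)) {s : ℝ}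
    (hs : 0 < s) : S s * P = P := by
  have hshift : Tendsto (fun t => S s * S t) atTop (𝓝 P) :=
    (hP.comp (tendsto_atTop_add_const_right atTop s tendsto_id)).congr'
      (by filter_upwards [eventually_gt_atTop 0] with t ht using hS t ht s hs)
  exact tendsto_nhds_unique (hP.const_mul (S s)) hshift

theorem eq_mul_of_tendsto (hS : IsSemigroup S) (hP : Tendsto S atTop (𝓝 P)) {s : ℝ}
    (hs : 0 < s) : P * S s = P := by
  have hshift : Tendsto (fun t => S t * S s) atTop (𝓝 P) :=
    (hP.comp (tendsto_atTop_add_const_left atTop s tendsto_id)).congr'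
      (by filter_upwards [eventually_gt_atTop 0] with t ht using hS s hs t ht)
  exact tendsto_nhds_unique (hP.mul_const (S s)) hshift

theorem mul_self_of_tendsto (hS : IsSemigroup S) (hP : Tendsto S atTop (𝓝 P)) :
    P * P = P := by
  have hconst : Tendsto (fun s => S s * P) atTop (𝓝 P) :=
    tendsto_const_nhds.congr'
      (by filter_upwards [eventually_gt_atTop 0] with s hs using (hS.mul_eq_of_tendsto hP hs).symm)
  exact tendsto_nhds_unique (hP.mul_const P) hconst

theorem sub_of_tendsto (hS : IsSemigroup S) (hP : Tendsto S atTop (𝓝 P)) :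
    IsSemigroup (fun t => S t - P) := by
  intro s hs t ht
  rw [sub_mul, mul_sub, mul_sub, hS.mul_eq_of_tendsto hP ht, hS.eq_mul_of_tendsto hP hs,
    hS.mul_self_of_tendsto hP, ← hS s hs t ht, sub_self, sub_zero]

end IsSemigroup

theorem statement3_general
    {E : Type*} [NormedAddCommGroup E] [NormedSpace ℝ E]
    (S : ℝ → E →L[ℝ] E)
    (hsg : ∀ s ∈ Ioi (0 : ℝ), ∀ t ∈ Ioi (0 : ℝ), S (s + t) = (S t).comp (S s))
    (hloc : ∃ C : ℝ, ∀ t ∈ Ioc (0 : ℝ) 1, ‖S t‖ ≤ C)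
    (P : E →L[ℝ] E)
    (hP : Tendsto (fun t : ℝ => S t) atTop (𝓝 P)) :
    ∃ M : ℝ, 0 ≤ M ∧ ∃ δ : ℝ, 0 < δ ∧
      ∀ t ∈ Ioi (0 : ℝ), ‖S t - P‖ ≤ M * Real.exp (-δ * t) := by
  obtain ⟨C, hC⟩ := hloc
  have hS : IsSemigroup S := hsg
  have hRC : ∀ t ∈ Ioc (0 : ℝ) 1, ‖S t - P‖ ≤ C + ‖P‖ :=
    fun t ht => (norm_sub_le _ _).trans (by linarith [hC t ht])
  have hsmall : ∀ᶠ t in atTop, ‖S t - P‖ < 1 :=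
    (tendsto_iff_norm_sub_tendsto_zero.1 hP).eventually (gt_mem_nhds one_pos)
  obtain ⟨τ, hRτ, hτ⟩ := (hsmall.and (eventually_gt_atTop 0)).exists
  exact (hS.sub_of_tendsto hP).exists_norm_le_exp_neg_of_norm_lt_one hRC hτ hRτ

/-- If a semigroup `S` on a Banach lattice `E` converges in operator norm
to `P` as `t → ∞`, then the convergence is exponentially fast: there are `M ≥ 0` and
`δ > 0` with `‖S t − P‖ ≤ M e^{−δ t}` for all `t > 0`. -/
theorem statement3
    {E : Type*} [NormedAddCommGroup E] [Lattice E] [HasSolidNorm E] [IsOrderedAddMonoid E] [NormedSpace ℝ E] [CompleteSpace E]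
    (S : ℝ → E →L[ℝ] E)
    (hsg : ∀ s ∈ Ioi (0 : ℝ), ∀ t ∈ Ioi (0 : ℝ), S (s + t) = (S t).comp (S s))
    (hloc : ∃ C : ℝ, ∀ t ∈ Ioc (0 : ℝ) 1, ‖S t‖ ≤ C)
    (P : E →L[ℝ] E)
    (hP : Tendsto (fun t : ℝ => S t) atTop (𝓝 P)) :
    ∃ M : ℝ, 0 ≤ M ∧ ∃ δ : ℝ, 0 < δ ∧
      ∀ t ∈ Ioi (0 : ℝ), ‖S t - P‖ ≤ M * Real.exp (-δ * t) :=
  statement3_general S hsg hloc P hP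
end

section
/- Let (Ω, μ) be a σ-finite measure space and let S and T be semigroups on L¹(Ω, μ) such that T is positive, |S(t)f| ≤ T(t)|f| for all f ∈ L¹(Ω,μ) and all t ∈ (0,∞), the semigroup T is norm-preserving on the positive cone (i.e. ‖T(t)g‖₁ = ‖g‖₁ for every g ≥ 0 and every t), and T has no non-zero fixed vector. Then the fixed space of S is {0}; i.e., if f ∈ L¹(Ω,μ) satisfies S(t)f = f for all t ∈ (0,∞), then f = 0. -/
open Filter Topology Set MeasureTheory
open scoped ENNReal

private lemma norm_eq_integral_of_nonneg' {Ω : Type*} [MeasurableSpace Ω] {μ : Measure Ω}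
    (h : Lp ℝ 1 μ) (hh : 0 ≤ h) : ‖h‖ = ∫ x, h x ∂μ := by
  rw [L1.norm_eq_integral_norm]
  refine integral_congr_ae ?_
  filter_upwards [(Lp.coeFn_nonneg h).2 hh] with x hx
  simp [Real.norm_eq_abs, abs_of_nonneg hx]

private lemma eq_of_le_of_norm_eq' {Ω : Type*} [MeasurableSpace Ω] {μ : Measure Ω}
    (a b : Lp ℝ 1 μ) (ha : 0 ≤ a) (hab : a ≤ b) (hn : ‖b‖ = ‖a‖) : b = a := by
  have hb : 0 ≤ b := le_trans ha hab
  have hba : 0 ≤ b - a := sub_nonneg.2 hab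
  have h1 : ‖b - a‖ = ∫ x, (b - a : Lp ℝ 1 μ) x ∂μ := norm_eq_integral_of_nonneg' _ hba
  have h2 : ∫ x, (b - a : Lp ℝ 1 μ) x ∂μ = ∫ x, b x ∂μ - ∫ x, a x ∂μ := by
    rw [integral_congr_ae (Lp.coeFn_sub b a)]
    exact integral_sub (L1.integrable_coeFn b) (L1.integrable_coeFn a)
  have h0 : ‖b - a‖ = 0 := by
    rw [h1, h2, ← norm_eq_integral_of_nonneg' a ha, ← norm_eq_integral_of_nonneg' b hb, hn,
      sub_self]
  exact sub_eq_zero.mp (norm_eq_zero.mp h0)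

/-- Let `S` and `T` be semigroups on `L¹(Ω, μ)` such that `T` is
positive, `|S t f| ≤ T t |f|` for all `f` and `t > 0`, `T` is norm-preserving on the
positive cone, and `T` has no non-zero fixed vector.  Then the fixed space of `S` is
trivial. -/
theorem statement17
    {Ω : Type*} [MeasurableSpace Ω] (μ : Measure Ω) [SigmaFinite μ]
    (S T : ℝ → Lp ℝ 1 μ →L[ℝ] Lp ℝ 1 μ)
    (hsgS : ∀ s ∈ Ioi (0 : ℝ), ∀ t ∈ Ioi (0 : ℝ), S (s + t) = (S t).comp (S s))
    (hlocS : ∃ C : ℝ, ∀ t ∈ Ioc (0 : ℝ) 1, ‖S t‖ ≤ C)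
    (hsgT : ∀ s ∈ Ioi (0 : ℝ), ∀ t ∈ Ioi (0 : ℝ), T (s + t) = (T t).comp (T s))
    (hlocT : ∃ C : ℝ, ∀ t ∈ Ioc (0 : ℝ) 1, ‖T t‖ ≤ C)
    -- `T` is positive:
    (hposT : ∀ t ∈ Ioi (0 : ℝ), ∀ g : Lp ℝ 1 μ, 0 ≤ g → 0 ≤ T t g)
    -- `S` is dominated by `T`:
    (hdom : ∀ t ∈ Ioi (0 : ℝ), ∀ f : Lp ℝ 1 μ, |S t f| ≤ T t |f|)
    -- `T` preserves the norm of positive elements: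
    (hnorm : ∀ t ∈ Ioi (0 : ℝ), ∀ g : Lp ℝ 1 μ, 0 ≤ g → ‖T t g‖ = ‖g‖)
    -- `T` has no non-zero fixed vector:
    (hfixT : ∀ g : Lp ℝ 1 μ, (∀ t ∈ Ioi (0 : ℝ), T t g = g) → g = 0) :
    ∀ f : Lp ℝ 1 μ, (∀ t ∈ Ioi (0 : ℝ), S t f = f) → f = 0 := by
  intro f hf
  have habs : |f| = 0 := by
    apply hfixT
    intro t ht
    have h1 : |f| ≤ T t |f| := by
      calc |f| = |S t f| := by rw [hf t ht]
        _ ≤ T t |f| := hdom t ht f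
    exact eq_of_le_of_norm_eq' |f| (T t |f|) (abs_nonneg f) h1
      (hnorm t ht |f| (abs_nonneg f))
  have h1 : f ≤ 0 := habs ▸ le_abs_self f
  have h2 : -f ≤ 0 := habs ▸ neg_le_abs f
  exact le_antisymm h1 (by simpa using h2)
end
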